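/- arXiv:2002.03400 — 2 statements merged into one kernel-verified Lean document; each statement's English description precedes it below -/
import Mathlib

section
/- Let D be a real m×s matrix with orthonormal columns (Dᵀ D = 1), let R be a real s×r matrix with orthonormal columns (Rᵀ R = 1), let K be a real m×n matrix, and set U = D·R. Then ‖K − U·Uᵀ·K‖_F² = ‖K − D·Dᵀ·K‖_F² + ‖Dᵀ·K − R·Rᵀ·Dᵀ·K‖_F². (This identity, used in the proof of Theorem 5.1, decomposes the approximation error of a nested column basis U = D·R into the error of the coarser basis D plus the compression error of the transfer matrix R applied to the intermediate matrix Dᵀ·K.) -/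
/-!
Write `A = K - D Dᵀ K` and `M = Dᵀ K - R Rᵀ Dᵀ K`. Expanding `(D R)(D R)ᵀ = D R Rᵀ Dᵀ` gives
`K - (D R)(D R)ᵀ K = A + D M`. Since `Dᵀ D = 1`, the residual `A` is orthogonal to the range of `D`
(`Dᵀ A = 0`) and `D` is an isometry for the Frobenius norm, so Pythagoras gives
`‖A + D M‖² = ‖A‖² + ‖M‖²`.
-/

open Matrix

/-- Frobenius norm of a real matrix. -/
noncomputable def frobNorm {α β : Type*} [Fintype α] [Fintype β] (A : Matrix α β ℝ) : ℝ :=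
  Real.sqrt (∑ i, ∑ j, A i j ^ 2)

section Frobenius

variable {α β γ : Type*} [Fintype α] [Fintype β] [Fintype γ]

lemma frobNorm_sq_eq_trace (A : Matrix α β ℝ) : frobNorm A ^ 2 = trace (Aᵀ * A) := by
  rw [frobNorm, Real.sq_sqrt (by positivity), trace, Finset.sum_comm]
  simp [diag, mul_apply, sq]

lemma frobNorm_add_sq_of_transpose_mul_eq_zero {A B : Matrix α β ℝ} (h : Aᵀ * B = 0) :
    frobNorm (A + B) ^ 2 = frobNorm A ^ 2 + frobNorm B ^ 2 := by
  have h' : Bᵀ * A = 0 := by simpa using congrArg transpose h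
  simp only [frobNorm_sq_eq_trace, transpose_add, Matrix.add_mul, Matrix.mul_add, h, h',
    add_zero, zero_add, trace_add]

lemma frobNorm_mul_sq_of_transpose_mul_self_eq_one [DecidableEq β] {D : Matrix α β ℝ}
    (hD : Dᵀ * D = 1) (M : Matrix β γ ℝ) : frobNorm (D * M) ^ 2 = frobNorm M ^ 2 := by
  rw [frobNorm_sq_eq_trace, frobNorm_sq_eq_trace, transpose_mul, Matrix.mul_assoc,
    ← Matrix.mul_assoc Dᵀ, hD, Matrix.one_mul]

end Frobenius

section Projection

variable {α β γ δ : Type*} [Fintype α] [Fintype β]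

lemma transpose_mul_sub_mul_transpose_mul_eq_zero [DecidableEq β] {D : Matrix α β ℝ}
    (hD : Dᵀ * D = 1) (K : Matrix α δ ℝ) : Dᵀ * (K - D * (Dᵀ * K)) = 0 := by
  rw [Matrix.mul_sub, ← Matrix.mul_assoc, hD, Matrix.one_mul, sub_self]

lemma transpose_sub_mul_transpose_mul_mul_eq_zero [Fintype δ] [DecidableEq β] {D : Matrix α β ℝ}
    (hD : Dᵀ * D = 1) (K : Matrix α δ ℝ) (M : Matrix β γ ℝ) :
    (K - D * (Dᵀ * K))ᵀ * (D * M) = 0 := by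
  rw [← Matrix.mul_assoc, ← transpose_transpose D, ← transpose_mul, transpose_transpose,
    transpose_mul_sub_mul_transpose_mul_eq_zero hD, transpose_zero, Matrix.zero_mul]

lemma sub_mul_mul_transpose_mul_eq_add [Fintype γ] (D : Matrix α β ℝ) (R : Matrix β γ ℝ)
    (K : Matrix α δ ℝ) :
    K - (D * R) * ((D * R)ᵀ * K) = (K - D * (Dᵀ * K)) + D * (Dᵀ * K - R * (Rᵀ * (Dᵀ * K))) := by
  simp only [transpose_mul, Matrix.mul_sub, Matrix.mul_assoc]
  abel

end Projection

theorem nested_basis_error_decomposition_general {m s r n : ℕ}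
    (D : Matrix (Fin m) (Fin s) ℝ) (R : Matrix (Fin s) (Fin r) ℝ)
    (K : Matrix (Fin m) (Fin n) ℝ)
    (hD : Dᵀ * D = 1) :
    frobNorm (K - (D * R) * ((D * R)ᵀ * K)) ^ 2 =
      frobNorm (K - D * (Dᵀ * K)) ^ 2 +
        frobNorm (Dᵀ * K - R * (Rᵀ * (Dᵀ * K))) ^ 2 := by
  rw [sub_mul_mul_transpose_mul_eq_add,
    frobNorm_add_sq_of_transpose_mul_eq_zero (transpose_sub_mul_transpose_mul_mul_eq_zero hD K _),
    frobNorm_mul_sq_of_transpose_mul_self_eq_one hD]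

theorem nested_basis_error_decomposition {m s r n : ℕ}
    (D : Matrix (Fin m) (Fin s) ℝ) (R : Matrix (Fin s) (Fin r) ℝ)
    (K : Matrix (Fin m) (Fin n) ℝ)
    (hD : Dᵀ * D = 1) (hR : Rᵀ * R = 1) :
    frobNorm (K - (D * R) * ((D * R)ᵀ * K)) ^ 2 =
      frobNorm (K - D * (Dᵀ * K)) ^ 2 +
        frobNorm (Dᵀ * K - R * (Rᵀ * (Dᵀ * K))) ^ 2 :=
  nested_basis_error_decomposition_general D R K hD
end

section
/- (Theorem 5.2, row-wise butterfly error bound.) Fix natural numbers L ≥ 1, lm ≤ L, m₀ ≥ 1, n₀ ≥ 1, a real ε ≥ 0, and a real matrix A of size (2^L·m₀) × (2^L·n₀). For 0 ≤ l ≤ lm, τ ∈ {0,…,2^l−1}, ν ∈ {0,…,2^{L−l}−1}, let K(l,τ,ν) be the (2^{L−l}·m₀) × (2^l·n₀) block of A with entries K(l,τ,ν)(i,j) = A(τ·2^{L−l}·m₀ + i, ν·2^l·n₀ + j). Suppose given ranks r(l,τ,ν) ∈ ℕ and matrices as follows: (a) for each ν ∈ {0,…,2^L−1}, a matrix V(0,0,ν)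 of size n₀ × r(0,0,ν) with orthonormal columns such that ‖K(0,0,ν) − K(0,0,ν)·V(0,0,ν)·V(0,0,ν)ᵀ‖_F ≤ ε·‖K(0,0,ν)‖_F; (b) for each l with 1 ≤ l ≤ lm and each τ ∈ {0,…,2^l−1}, ν ∈ {0,…,2^{L−l}−1}: letting G(l,τ,ν) = diag(V(l−1, ⌊τ/2⌋, 2ν), V(l−1, ⌊τ/2⌋, 2ν+1)), a transfer matrix W(l,τ,ν) of size (r(l−1,⌊τ/2⌋,2ν) + r(l−1,⌊τ/2⌋,2ν+1)) × r(l,τ,ν) with orthonormal columns such that ‖K(l,τ,ν)·G(l,τ,ν) − K(l,τ,ν)·G(l,τ,ν)·W(l,τ,ν)·W(l,τ,ν)ᵀ‖_F ≤ ε·‖K(l,τ,ν)·G(l,τ,ν)‖_F, with V(l,τ,ν) defined as G(l,τ,ν)·W(l,τ,ν). Then for every l with 0 ≤ l ≤ lm: Σ_{τ<2^l} Σ_{ν<2^{L−l}} ‖K(l,τ,ν) − K(l,τ,ν)·V(l,τ,ν)·V(l,τ,ν)ᵀ‖_F² ≤ (l+1)·ε²·‖A‖_F². -/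
open Matrix

/-- Global row index of entry `i` of the `τ`-th row group at level `l`. -/
def rowIdx (L m₀ l τ : ℕ) (hl : l ≤ L) (hτ : τ < 2 ^ l)
    (i : Fin (2 ^ (L - l) * m₀)) : Fin (2 ^ L * m₀) :=
  ⟨τ * (2 ^ (L - l) * m₀) + i.1, by
    have h1 : τ * (2 ^ (L - l) * m₀) + i.1 < (τ + 1) * (2 ^ (L - l) * m₀) := by
      rw [Nat.succ_mul]
      exact Nat.add_lt_add_left i.2 _
    have h2 : (τ + 1) * (2 ^ (L - l) * m₀) ≤ 2 ^ l * (2 ^ (L - l) * m₀) :=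
      Nat.mul_le_mul_right _ hτ
    have h3 : 2 ^ l * (2 ^ (L - l) * m₀) = 2 ^ L * m₀ := by
      rw [← mul_assoc, ← pow_add]
      congr 2
      omega
    exact h1.trans_le (h2.trans_eq h3)⟩

/-- Global column index of entry `j` of the `ν`-th column group at level `l`. -/
def colIdx (L n₀ l ν : ℕ) (hl : l ≤ L) (hν : ν < 2 ^ (L - l))
    (j : Fin (2 ^ l * n₀)) : Fin (2 ^ L * n₀) :=
  ⟨ν * (2 ^ l * n₀) + j.1, by
    have h1 : ν * (2 ^ l * n₀) + j.1 < (ν + 1) * (2 ^ l * n₀) := by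
      rw [Nat.succ_mul]
      exact Nat.add_lt_add_left j.2 _
    have h2 : (ν + 1) * (2 ^ l * n₀) ≤ 2 ^ (L - l) * (2 ^ l * n₀) :=
      Nat.mul_le_mul_right _ hν
    have h3 : 2 ^ (L - l) * (2 ^ l * n₀) = 2 ^ L * n₀ := by
      rw [← mul_assoc, ← pow_add]
      congr 2
      omega
    exact h1.trans_le (h2.trans_eq h3)⟩

/-- The `(τ,ν)` block of `A` at level `l`. -/
def blockOf {L m₀ n₀ : ℕ} (A : Matrix (Fin (2 ^ L * m₀)) (Fin (2 ^ L * n₀)) ℝ)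
    (l τ ν : ℕ) (hl : l ≤ L) (hτ : τ < 2 ^ l) (hν : ν < 2 ^ (L - l)) :
    Matrix (Fin (2 ^ (L - l) * m₀)) (Fin (2 ^ l * n₀)) ℝ :=
  Matrix.of fun i j => A (rowIdx L m₀ l τ hl hτ i) (colIdx L n₀ l ν hl hν j)

/-- Splitting the columns of a level-`l` block (column-node `ν` at level `L-l`) into the
columns of its two children `2ν` and `2ν+1` (blocks at level `l-1`). -/
def colSplit (n₀ l : ℕ) (hl : 1 ≤ l) :
    Fin (2 ^ l * n₀) ≃ Fin (2 ^ (l - 1) * n₀) ⊕ Fin (2 ^ (l - 1) * n₀) :=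
  (finCongr (by
    have h2 : 2 ^ l = 2 ^ (l - 1) * 2 := by
      rw [← pow_succ]
      congr 1
      omega
    rw [h2]
    ring)).trans finSumFinEquiv.symm

/-!
Fix a level-`l` block `K` with nested basis `V = G W`, where `G = diag(V₁, V₂)` collects the bases
of its two column children at level `l - 1`. Since `G` has orthonormal columns, `K - K V Vᵀ` is
the orthogonal sum of `K - K G Gᵀ` and `(K G - K G W Wᵀ) Gᵀ`; the second has norm at most
`ε ‖K G‖ ≤ ε ‖K‖`. The first splits along the two column halves of `K`, each of which is a row
half of a child error `K' - K' Vᵢ Vᵢᵀ`. Each row half of each level-`(l - 1)` block arises in this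
way from exactly one level-`l` block, so summing over all blocks the first pieces add up to the
level-`(l - 1)` error and the second ones to at most `ε² ‖A‖²`. Induction on `l` concludes.
-/

section MatrixLemmas

variable {α α' β β' β₁ β₂ γ γ₁ γ₂ δ : Type*}

noncomputable def frobSq [Fintype α] [Fintype β] (A : Matrix α β ℝ) : ℝ := ∑ i, ∑ j, A i j ^ 2

lemma frobSq_nonneg [Fintype α] [Fintype β] (A : Matrix α β ℝ) : 0 ≤ frobSq A := by
  unfold frobSq; positivity

lemma frobNorm_sq [Fintype α] [Fintype β] (A : Matrix α β ℝ) : frobNorm A ^ 2 = frobSq A :=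
  Real.sq_sqrt (frobSq_nonneg A)

lemma frobSq_le_of_frobNorm_le [Fintype α] [Fintype β] [Fintype γ] [Fintype δ] {ε : ℝ}
    {X : Matrix α β ℝ} {Y : Matrix γ δ ℝ} (h : frobNorm X ≤ ε * frobNorm Y) :
    frobSq X ≤ ε ^ 2 * frobSq Y := by
  rw [← frobNorm_sq, ← frobNorm_sq, ← mul_pow]
  exact pow_le_pow_left₀ (Real.sqrt_nonneg _) h 2

lemma frobSq_eq_trace [Fintype α] [Fintype β] (A : Matrix α β ℝ) : frobSq A = trace (Aᵀ * A) := by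
  rw [frobSq, trace, Finset.sum_comm]
  simp [mul_apply, sq]

lemma frobSq_submatrix_id_equiv [Fintype α] [Fintype β] [Fintype β'] (A : Matrix α β ℝ)
    (e : β' ≃ β) : frobSq (A.submatrix id e) = frobSq A :=
  Finset.sum_congr rfl fun _ _ => Fintype.sum_equiv e _ _ fun _ => rfl

lemma frobSq_fromCols [Fintype α] [Fintype β₁] [Fintype β₂] (A₁ : Matrix α β₁ ℝ)
    (A₂ : Matrix α β₂ ℝ) : frobSq (fromCols A₁ A₂) = frobSq A₁ + frobSq A₂ := by
  simp only [frobSq, Fintype.sum_sum_type, fromCols_apply_inl, fromCols_apply_inr,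
    Finset.sum_add_distrib]

/-- Pythagoras: the rows of `Z Gᵀ` lie in the column space of `G`, which is orthogonal to the
rows of every `D` with `D G = 0`. -/
lemma frobSq_add_mul_transpose [Fintype α] [Fintype β] [Fintype γ] [DecidableEq γ]
    {G : Matrix β γ ℝ} (hG : Gᵀ * G = 1) {D : Matrix α β ℝ} (hDG : D * G = 0)
    (Z : Matrix α γ ℝ) : frobSq (D + Z * Gᵀ) = frobSq D + frobSq Z := by
  have h₁ : trace (Dᵀ * (Z * Gᵀ)) = 0 := by
    rw [← Matrix.mul_assoc, trace_mul_comm, ← Matrix.mul_assoc, ← transpose_mul, hDG]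
    simp
  have h₂ : trace ((Z * Gᵀ)ᵀ * D) = 0 := by
    rw [← trace_transpose, transpose_mul, transpose_transpose, h₁]
  have h₃ : trace ((Z * Gᵀ)ᵀ * (Z * Gᵀ)) = trace (Zᵀ * Z) := by
    rw [transpose_mul, transpose_transpose, Matrix.mul_assoc, trace_mul_comm, Matrix.mul_assoc,
      Matrix.mul_assoc, hG, Matrix.mul_one]
  simp only [frobSq_eq_trace, transpose_add, Matrix.add_mul, Matrix.mul_add, trace_add, h₁, h₂,
    h₃, add_zero, zero_add]


lemma submatrix_transpose_mul_self [Fintype β] [Fintype β'] (P : Matrix β γ ℝ) (e : β' ≃ β) :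
    (P.submatrix e id)ᵀ * P.submatrix e id = Pᵀ * P := by
  rw [transpose_submatrix]
  simp [submatrix_mul_equiv Pᵀ P id e id]

lemma fromBlocks_transpose_mul_self_eq_one [Fintype β₁] [Fintype β₂] [DecidableEq γ]
    [DecidableEq δ] {V₁ : Matrix β₁ γ ℝ} {V₂ : Matrix β₂ δ ℝ} (h₁ : V₁ᵀ * V₁ = 1)
    (h₂ : V₂ᵀ * V₂ = 1) : (fromBlocks V₁ 0 0 V₂)ᵀ * fromBlocks V₁ 0 0 V₂ = 1 := by
  simp [fromBlocks_transpose, fromBlocks_multiply, h₁, h₂]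

lemma mul_transpose_mul_mul_eq_one [Fintype β] [Fintype γ] [DecidableEq γ] [DecidableEq δ]
    {G : Matrix β γ ℝ} {W : Matrix γ δ ℝ} (hG : Gᵀ * G = 1) (hW : Wᵀ * W = 1) :
    (G * W)ᵀ * (G * W) = 1 := by
  rw [transpose_mul, Matrix.mul_assoc, ← Matrix.mul_assoc Gᵀ, hG, Matrix.one_mul, hW]


def projResidual [Fintype β] [Fintype γ] (K : Matrix α β ℝ) (P : Matrix β γ ℝ) : Matrix α β ℝ :=
  K - K * (P * Pᵀ)

lemma projResidual_mul_eq_zero [Fintype β] [Fintype γ] [DecidableEq γ] {P : Matrix β γ ℝ}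
    (hP : Pᵀ * P = 1) (K : Matrix α β ℝ) : projResidual K P * P = 0 := by
  rw [projResidual, Matrix.sub_mul, Matrix.mul_assoc, Matrix.mul_assoc, hP, Matrix.mul_one,
    sub_self]

lemma frobSq_eq_projResidual_add [Fintype α] [Fintype β] [Fintype γ] [DecidableEq γ]
    {P : Matrix β γ ℝ} (hP : Pᵀ * P = 1) (K : Matrix α β ℝ) :
    frobSq K = frobSq (projResidual K P) + frobSq (K * P) := by
  rw [← frobSq_add_mul_transpose hP (projResidual_mul_eq_zero hP K), projResidual,
    Matrix.mul_assoc, sub_add_cancel]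

lemma frobSq_mul_le [Fintype α] [Fintype β] [Fintype γ] [DecidableEq γ] {P : Matrix β γ ℝ}
    (hP : Pᵀ * P = 1) (K : Matrix α β ℝ) : frobSq (K * P) ≤ frobSq K := by
  rw [frobSq_eq_projResidual_add hP K]
  exact le_add_of_nonneg_left (frobSq_nonneg _)

lemma frobSq_projResidual_mul [Fintype α] [Fintype β] [Fintype γ] [Fintype δ] [DecidableEq γ]
    {G : Matrix β γ ℝ} (hG : Gᵀ * G = 1) (K : Matrix α β ℝ) (W : Matrix γ δ ℝ) :
    frobSq (projResidual K (G * W)) =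
      frobSq (projResidual K G) + frobSq (projResidual (K * G) W) := by
  rw [← frobSq_add_mul_transpose hG (projResidual_mul_eq_zero hG K)]
  congr 1
  simp only [projResidual, transpose_mul, Matrix.sub_mul, Matrix.mul_assoc]
  abel

lemma projResidual_submatrix_left [Fintype β] [Fintype γ] (K : Matrix α β ℝ) (P : Matrix β γ ℝ)
    (f : α' → α) : projResidual (K.submatrix f id) P = (projResidual K P).submatrix f id := by
  ext i j
  simp [projResidual, mul_apply]

lemma projResidual_fromBlocks [Fintype β₁] [Fintype β₂] [Fintype γ] [Fintype δ]
    (K : Matrix α (β₁ ⊕ β₂) ℝ) (P₁ : Matrix β₁ γ ℝ) (P₂ : Matrix β₂ δ ℝ) :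
    projResidual K (fromBlocks P₁ 0 0 P₂) =
      fromCols (projResidual K.toCols₁ P₁) (projResidual K.toCols₂ P₂) := by
  ext i (j | j) <;>
    simp [projResidual, fromBlocks_transpose, fromBlocks_multiply, mul_apply,
      Fintype.sum_sum_type]

lemma projResidual_submatrix_equiv [Fintype β] [Fintype β'] [Fintype γ] (K : Matrix α β ℝ)
    (P : Matrix β' γ ℝ) (e : β ≃ β') :
    projResidual K (P.submatrix e id) =
      (projResidual (K.submatrix id e.symm) P).submatrix id e := by
  ext i j
  simp only [projResidual, Matrix.sub_apply, submatrix_apply, id, mul_apply, transpose_apply]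
  rw [e.symm_apply_apply]
  congr 1
  exact Fintype.sum_equiv e _ _ fun k => by simp

theorem frobSq_projResidual_nested_le [Fintype α] [Fintype β] [Fintype β₁] [Fintype β₂]
    [Fintype γ₁] [Fintype γ₂] [DecidableEq γ₁] [DecidableEq γ₂] [Fintype δ] {ε : ℝ}
    (K : Matrix α β ℝ) (e : β ≃ β₁ ⊕ β₂)
    {V₁ : Matrix β₁ γ₁ ℝ} {V₂ : Matrix β₂ γ₂ ℝ} (h₁ : V₁ᵀ * V₁ = 1) (h₂ : V₂ᵀ * V₂ = 1)
    (W : Matrix (γ₁ ⊕ γ₂) δ ℝ)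
    (hW : frobNorm (projResidual (K.submatrix id e.symm * fromBlocks V₁ 0 0 V₂) W) ≤
      ε * frobNorm (K.submatrix id e.symm * fromBlocks V₁ 0 0 V₂)) :
    frobSq (projResidual K ((fromBlocks V₁ 0 0 V₂ * W).submatrix e id)) ≤
      frobSq (projResidual (K.submatrix id e.symm).toCols₁ V₁) +
        frobSq (projResidual (K.submatrix id e.symm).toCols₂ V₂) + ε ^ 2 * frobSq K := by
  set K' := K.submatrix id e.symm
  have hG := fromBlocks_transpose_mul_self_eq_one h₁ h₂
  have hKG : frobSq (projResidual (K' * fromBlocks V₁ 0 0 V₂) W) ≤ ε ^ 2 * frobSq K :=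
    calc _ ≤ ε ^ 2 * frobSq (K' * fromBlocks V₁ 0 0 V₂) := frobSq_le_of_frobNorm_le hW
      _ ≤ ε ^ 2 * frobSq K' := by gcongr; exact frobSq_mul_le hG K'
      _ = ε ^ 2 * frobSq K := by rw [frobSq_submatrix_id_equiv]
  rw [projResidual_submatrix_equiv, frobSq_submatrix_id_equiv, frobSq_projResidual_mul hG,
    projResidual_fromBlocks, frobSq_fromCols]
  gcongr

end MatrixLemmas

section Indexing

def groupIdx {k N K : ℕ} (hK : K = k * N) (a : Fin k) (i : Fin N) : Fin K :=
  ⟨a * N + i, by rw [hK, Nat.mul_comm (a : ℕ)]; exact Nat.mul_add_lt_mul_of_lt_of_lt a.2 i.2⟩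

lemma sum_eq_sum_groupIdx {M : Type*} [AddCommMonoid M] {k N K : ℕ} (hK : K = k * N)
    (g : Fin K → M) :
    ∑ x, g x = ∑ a : Fin k, ∑ i : Fin N, g (groupIdx hK a i) := by
  subst hK
  rw [← Fintype.sum_prod_type']
  refine (Fintype.sum_equiv finProdFinEquiv _ _ fun p => congrArg g (Fin.ext ?_)).symm
  simp only [groupIdx, finProdFinEquiv_apply_val]
  ring

lemma sum_sum_children {M : Type*} [AddCommMonoid M] {m m' n n' : ℕ} (hm : m' = m * 2)
    (hn : n' = n * 2) (f : Fin m → Fin n' → Fin 2 → M) :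
    ∑ τ : Fin m', ∑ ν : Fin n,
        f ⟨τ / 2, by have := τ.isLt; omega⟩ ⟨2 * ν, by have := ν.isLt; omega⟩ ⟨τ % 2, by omega⟩ +
      ∑ τ : Fin m', ∑ ν : Fin n,
        f ⟨τ / 2, by have := τ.isLt; omega⟩ ⟨2 * ν + 1, by have := ν.isLt; omega⟩
          ⟨τ % 2, by omega⟩ =
      ∑ τ', ∑ ν', ∑ b, f τ' ν' b := by
  simp only [← Finset.sum_add_distrib]
  have children : ∀ τ' b, ∑ ν', f τ' ν' b =
      ∑ ν : Fin n, (f τ' ⟨2 * ν, by omega⟩ b + f τ' ⟨2 * ν + 1, by omega⟩ b) := by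
    intro τ' b
    rw [sum_eq_sum_groupIdx hn, Finset.sum_congr rfl fun ν _ => Fin.sum_univ_two _]
    refine Finset.sum_congr rfl fun ν _ => ?_
    congr 2 <;> ext <;> simp only [groupIdx] <;> omega
  rw [sum_eq_sum_groupIdx (M := M) hm]
  refine Finset.sum_congr rfl fun τ' _ => ?_
  conv_rhs => rw [Finset.sum_comm]
  refine Finset.sum_congr rfl fun b _ => ?_
  have hdiv : (groupIdx hm τ' b : ℕ) / 2 = τ' := by simp only [groupIdx]; omega
  have hmod : (groupIdx hm τ' b : ℕ) % 2 = b := by simp only [groupIdx]; omega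
  simp only [children, hdiv, hmod]

end Indexing

section Blocks

variable {α : Type*} [Fintype α]

lemma frobSq_eq_sum_rowGroups {k N K : ℕ} (hK : K = k * N) (M : Matrix (Fin K) α ℝ) :
    frobSq M = ∑ a, frobSq (M.submatrix (groupIdx hK a) id) :=
  sum_eq_sum_groupIdx hK _

lemma frobSq_eq_sum_colGroups {k N K : ℕ} (hK : K = k * N) (M : Matrix α (Fin K) ℝ) :
    frobSq M = ∑ a, frobSq (M.submatrix id (groupIdx hK a)) := by
  simp only [frobSq, sum_eq_sum_groupIdx hK, submatrix_apply, id]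
  exact Finset.sum_comm

lemma two_pow_sub_eq_mul_two {l L : ℕ} (hl : l + 1 ≤ L) : 2 ^ (L - l) = 2 ^ (L - (l + 1)) * 2 := by
  rw [← pow_succ]
  congr 1
  omega

lemma sum_frobSq_blockOf {L m₀ n₀ l : ℕ} (A : Matrix (Fin (2 ^ L * m₀)) (Fin (2 ^ L * n₀)) ℝ)
    (hl : l ≤ L) :
    ∑ τ : Fin (2 ^ l), ∑ ν : Fin (2 ^ (L - l)), frobSq (blockOf A l τ ν hl τ.2 ν.2) =
      frobSq A := by
  rw [frobSq_eq_sum_rowGroups (k := 2 ^ l) (N := 2 ^ (L - l) * m₀)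
    (by rw [← pow_sub_mul_pow 2 hl]; ring)]
  refine Finset.sum_congr rfl fun τ _ => ?_
  rw [frobSq_eq_sum_colGroups (k := 2 ^ (L - l)) (N := 2 ^ l * n₀)
    (by rw [← pow_sub_mul_pow 2 hl]; ring)]
  rfl

end Blocks

section Children

variable {L m₀ n₀ : ℕ} (A : Matrix (Fin (2 ^ L * m₀)) (Fin (2 ^ L * n₀)) ℝ)

lemma toCols₁_blockOf_colSplit {l τ ν : ℕ} (hl : l + 1 ≤ L) (hτ : τ < 2 ^ (l + 1))
    (hν : ν < 2 ^ (L - (l + 1))) :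
    ((blockOf A (l + 1) τ ν hl hτ hν).submatrix id
        (colSplit n₀ (l + 1) (Nat.le_add_left 1 l)).symm).toCols₁ =
      (blockOf A l (τ / 2) (2 * ν) (by omega) (Nat.div_lt_of_lt_mul (pow_succ' 2 l ▸ hτ))
          (by rw [two_pow_sub_eq_mul_two hl]; omega)).submatrix
        (groupIdx (by rw [two_pow_sub_eq_mul_two hl]; ring) ⟨τ % 2, Nat.mod_lt τ two_pos⟩) id := by
  ext i j
  refine congrArg₂ A (Fin.ext ?_) (Fin.ext ?_)
  · show τ * _ + (i : ℕ) = τ / 2 * _ + (τ % 2 * _ + i)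
    rw [two_pow_sub_eq_mul_two hl]
    conv_lhs => rw [← Nat.div_add_mod τ 2]
    ring
  · show ν * (2 ^ (l + 1) * n₀) + (j : ℕ) = 2 * ν * (2 ^ l * n₀) + j
    rw [pow_succ]
    ring

lemma toCols₂_blockOf_colSplit {l τ ν : ℕ} (hl : l + 1 ≤ L) (hτ : τ < 2 ^ (l + 1))
    (hν : ν < 2 ^ (L - (l + 1))) :
    ((blockOf A (l + 1) τ ν hl hτ hν).submatrix id
        (colSplit n₀ (l + 1) (Nat.le_add_left 1 l)).symm).toCols₂ =
      (blockOf A l (τ / 2) (2 * ν + 1) (by omega) (Nat.div_lt_of_lt_mul (pow_succ' 2 l ▸ hτ))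
          (by rw [two_pow_sub_eq_mul_two hl]; omega)).submatrix
        (groupIdx (by rw [two_pow_sub_eq_mul_two hl]; ring) ⟨τ % 2, Nat.mod_lt τ two_pos⟩) id := by
  ext i j
  refine congrArg₂ A (Fin.ext ?_) (Fin.ext ?_)
  · show τ * _ + (i : ℕ) = τ / 2 * _ + (τ % 2 * _ + i)
    rw [two_pow_sub_eq_mul_two hl]
    conv_lhs => rw [← Nat.div_add_mod τ 2]
    ring
  · show ν * (2 ^ (l + 1) * n₀) + (2 ^ l * n₀ + (j : ℕ)) = (2 * ν + 1) * (2 ^ l * n₀) + j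
    rw [pow_succ]
    ring

end Children

section Butterfly

variable {L m₀ n₀ : ℕ} (A : Matrix (Fin (2 ^ L * m₀)) (Fin (2 ^ L * n₀)) ℝ)
  {r : ℕ → ℕ → ℕ → ℕ} (V : (l τ ν : ℕ) → Matrix (Fin (2 ^ l * n₀)) (Fin (r l τ ν)) ℝ)

noncomputable def levelError (l : ℕ) (hl : l ≤ L) : ℝ :=
  ∑ τ : Fin (2 ^ l), ∑ ν : Fin (2 ^ (L - l)),
    frobSq (projResidual (blockOf A l τ ν hl τ.2 ν.2) (V l τ ν))

lemma transpose_mul_self_eq_one_of_nested {lm : ℕ} (hlm : lm ≤ L)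
    (W : (l : ℕ) → (τ : ℕ) → (ν : ℕ) →
      Matrix (Fin (r (l - 1) (τ / 2) (2 * ν)) ⊕ Fin (r (l - 1) (τ / 2) (2 * ν + 1)))
        (Fin (r l τ ν)) ℝ)
    (hleaf : ∀ ν, ν < 2 ^ L → (V 0 0 ν)ᵀ * V 0 0 ν = 1)
    (hW : ∀ l τ ν, 1 ≤ l → l ≤ lm → τ < 2 ^ l → ν < 2 ^ (L - l) → (W l τ ν)ᵀ * W l τ ν = 1)
    (hVW : ∀ l τ ν (hl1 : 1 ≤ l), l ≤ lm → τ < 2 ^ l → ν < 2 ^ (L - l) →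
      V l τ ν = (fromBlocks (V (l - 1) (τ / 2) (2 * ν)) 0 0 (V (l - 1) (τ / 2) (2 * ν + 1)) *
        W l τ ν).submatrix (colSplit n₀ l hl1) id) :
    ∀ l τ ν, l ≤ lm → τ < 2 ^ l → ν < 2 ^ (L - l) → (V l τ ν)ᵀ * V l τ ν = 1 := by
  intro l
  induction l with
  | zero =>
    intro τ ν _ hτ hν
    obtain rfl : τ = 0 := by simpa using hτ
    exact hleaf ν hν
  | succ l ih =>
    intro τ ν hl hτ hν
    have hν' := two_pow_sub_eq_mul_two (hl.trans hlm)
    have hτ' : τ / 2 < 2 ^ l := Nat.div_lt_of_lt_mul (pow_succ' 2 l ▸ hτ)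
    rw [hVW _ _ _ (Nat.le_add_left 1 l) hl hτ hν, submatrix_transpose_mul_self]
    exact mul_transpose_mul_mul_eq_one
      (fromBlocks_transpose_mul_self_eq_one (ih _ _ (by omega) hτ' (by omega))
        (ih _ _ (by omega) hτ' (by omega)))
      (hW _ _ _ (Nat.le_add_left 1 l) hl hτ hν)

lemma levelError_zero_le {ε : ℝ}
    (hleaf : ∀ ν (hν : ν < 2 ^ L),
      frobNorm (projResidual (blockOf A 0 0 ν (Nat.zero_le L) (Nat.two_pow_pos _) hν) (V 0 0 ν)) ≤
        ε * frobNorm (blockOf A 0 0 ν (Nat.zero_le L) (Nat.two_pow_pos _) hν)) :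
    levelError A V 0 (Nat.zero_le L) ≤ ε ^ 2 * frobSq A := by
  rw [← sum_frobSq_blockOf A (Nat.zero_le L), Finset.mul_sum]
  refine Finset.sum_le_sum fun ⟨τ, hτ⟩ _ => ?_
  obtain rfl : τ = 0 := by simpa using hτ
  rw [Finset.mul_sum]
  exact Finset.sum_le_sum fun ν _ => frobSq_le_of_frobNorm_le (hleaf ν ν.2)

lemma levelError_succ_le {ε : ℝ} {l : ℕ} (hl : l + 1 ≤ L)
    (W : (l : ℕ) → (τ : ℕ) → (ν : ℕ) →
      Matrix (Fin (r (l - 1) (τ / 2) (2 * ν)) ⊕ Fin (r (l - 1) (τ / 2) (2 * ν + 1)))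
        (Fin (r l τ ν)) ℝ)
    (hV : ∀ τ ν, τ < 2 ^ l → ν < 2 ^ (L - l) → (V l τ ν)ᵀ * V l τ ν = 1)
    (hW : ∀ τ ν (hτ : τ < 2 ^ (l + 1)) (hν : ν < 2 ^ (L - (l + 1))),
      let G := fromBlocks (V (l + 1 - 1) (τ / 2) (2 * ν)) 0 0 (V (l + 1 - 1) (τ / 2) (2 * ν + 1))
      let K := (blockOf A (l + 1) τ ν hl hτ hν).submatrix id
        (colSplit n₀ (l + 1) (Nat.le_add_left 1 l)).symm
      frobNorm (projResidual (K * G) (W (l + 1) τ ν)) ≤ ε * frobNorm (K * G) ∧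
        V (l + 1) τ ν =
          (G * W (l + 1) τ ν).submatrix (colSplit n₀ (l + 1) (Nat.le_add_left 1 l)) id) :
    levelError A V (l + 1) hl ≤ levelError A V l (by omega) + ε ^ 2 * frobSq A := by
  have hcols := two_pow_sub_eq_mul_two hl
  have hrows : 2 ^ (L - l) * m₀ = 2 * (2 ^ (L - (l + 1)) * m₀) := by rw [hcols]; ring
  have hτ : ∀ τ : Fin (2 ^ (l + 1)), (τ : ℕ) / 2 < 2 ^ l := fun τ =>
    Nat.div_lt_of_lt_mul (pow_succ' 2 l ▸ τ.2)
  have hν₁ : ∀ ν : Fin (2 ^ (L - (l + 1))), 2 * (ν : ℕ) < 2 ^ (L - l) := fun ν => by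
    have := ν.2; omega
  have hν₂ : ∀ ν : Fin (2 ^ (L - (l + 1))), 2 * (ν : ℕ) + 1 < 2 ^ (L - l) := fun ν => by
    have := ν.2; omega
  have hb : ∀ τ : Fin (2 ^ (l + 1)), (τ : ℕ) % 2 < 2 := fun τ => Nat.mod_lt τ two_pos
  -- the error of block `(τ', ν')` in the rows of its row child `2τ' + b`
  set f : Fin (2 ^ l) → Fin (2 ^ (L - l)) → Fin 2 → ℝ := fun τ' ν' b =>
    frobSq ((projResidual (blockOf A l τ' ν' (by omega) τ'.2 ν'.2) (V l τ' ν')).submatrix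
      (groupIdx hrows b) id) with hf
  have step : ∀ (τ : Fin (2 ^ (l + 1))) (ν : Fin (2 ^ (L - (l + 1)))),
      frobSq (projResidual (blockOf A (l + 1) τ ν hl τ.2 ν.2) (V (l + 1) τ ν)) ≤
        f ⟨τ / 2, hτ τ⟩ ⟨2 * ν, hν₁ ν⟩ ⟨τ % 2, hb τ⟩ +
          f ⟨τ / 2, hτ τ⟩ ⟨2 * ν + 1, hν₂ ν⟩ ⟨τ % 2, hb τ⟩ +
          ε ^ 2 * frobSq (blockOf A (l + 1) τ ν hl τ.2 ν.2) := by
    intro τ ν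
    obtain ⟨hWτν, hVτν⟩ := hW τ ν τ.2 ν.2
    have := frobSq_projResidual_nested_le _ _ (hV _ _ (hτ τ) (hν₁ ν)) (hV _ _ (hτ τ) (hν₂ ν)) _ hWτν
    rw [toCols₁_blockOf_colSplit, toCols₂_blockOf_colSplit, projResidual_submatrix_left,
      projResidual_submatrix_left] at this
    rw [hVτν]
    exact this
  calc levelError A V (l + 1) hl
      ≤ _ := Finset.sum_le_sum fun τ _ => Finset.sum_le_sum fun ν _ => step τ ν
    _ = levelError A V l (by omega) + ε ^ 2 * frobSq A := by
        simp only [Finset.sum_add_distrib, ← Finset.mul_sum]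
        rw [sum_sum_children (pow_succ 2 l) hcols f, sum_frobSq_blockOf]
        simp only [hf, ← frobSq_eq_sum_rowGroups]
        rfl

end Butterfly

theorem rowwise_butterfly_error_bound_general {L lm m₀ n₀ : ℕ}
    (hlm : lm ≤ L)
    (ε : ℝ)
    (A : Matrix (Fin (2 ^ L * m₀)) (Fin (2 ^ L * n₀)) ℝ)
    (r : ℕ → ℕ → ℕ → ℕ)
    (V : (l : ℕ) → (τ : ℕ) → (ν : ℕ) → Matrix (Fin (2 ^ l * n₀)) (Fin (r l τ ν)) ℝ)
    (W : (l : ℕ) → (τ : ℕ) → (ν : ℕ) →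
      Matrix (Fin (r (l - 1) (τ / 2) (2 * ν)) ⊕ Fin (r (l - 1) (τ / 2) (2 * ν + 1)))
        (Fin (r l τ ν)) ℝ)
    -- (a) level-0 row bases are orthonormal and compress the level-0 blocks with
    -- relative accuracy ε
    (hleaf : ∀ ν (hν : ν < 2 ^ (L - 0)),
      (V 0 0 ν)ᵀ * V 0 0 ν = 1 ∧
      frobNorm (blockOf A 0 0 ν (Nat.zero_le L) (Nat.two_pow_pos _) hν -
          blockOf A 0 0 ν (Nat.zero_le L) (Nat.two_pow_pos _) hν *
            (V 0 0 ν * (V 0 0 ν)ᵀ)) ≤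
        ε * frobNorm (blockOf A 0 0 ν (Nat.zero_le L) (Nat.two_pow_pos _) hν))
    -- (b) the transfer matrices are orthonormal, compress the intermediate
    -- matrices with relative accuracy ε, and define the nested bases V = G·W
    (hrec : ∀ l τ ν (hl1 : 1 ≤ l) (hl : l ≤ lm) (hτ : τ < 2 ^ l) (hν : ν < 2 ^ (L - l)),
      let G := Matrix.fromBlocks
        (V (l - 1) (τ / 2) (2 * ν)) 0 0 (V (l - 1) (τ / 2) (2 * ν + 1));
      let K' := (blockOf A l τ ν (hl.trans hlm) hτ hν).submatrix id (⇑(colSplit n₀ l hl1).symm);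
      (W l τ ν)ᵀ * W l τ ν = 1 ∧
      frobNorm (K' * G - K' * G * (W l τ ν * (W l τ ν)ᵀ)) ≤ ε * frobNorm (K' * G) ∧
      V l τ ν = (G * W l τ ν).submatrix (⇑(colSplit n₀ l hl1)) id) :
    ∀ l (hl : l ≤ lm),
      ∑ τ : Fin (2 ^ l), ∑ ν : Fin (2 ^ (L - l)),
        frobNorm (blockOf A l τ.1 ν.1 (hl.trans hlm) τ.2 ν.2 -
          blockOf A l τ.1 ν.1 (hl.trans hlm) τ.2 ν.2 *
            (V l τ.1 ν.1 * (V l τ.1 ν.1)ᵀ)) ^ 2 ≤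
      ((l + 1 : ℕ) : ℝ) * ε ^ 2 * frobNorm A ^ 2 := by
  have hV := transpose_mul_self_eq_one_of_nested V hlm W (fun ν hν => (hleaf ν hν).1)
    (fun l τ ν hl1 hl hτ hν => (hrec l τ ν hl1 hl hτ hν).1)
    (fun l τ ν hl1 hl hτ hν => (hrec l τ ν hl1 hl hτ hν).2.2)
  intro l hl
  simp only [frobNorm_sq]
  change levelError A V l (hl.trans hlm) ≤ _
  induction l with
  | zero => simpa using levelError_zero_le A V (fun ν hν => (hleaf ν hν).2)
  | succ l ih =>
    have hstep := levelError_succ_le A V (hl.trans hlm) W (fun τ ν => hV l τ ν (by omega))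
      (fun τ ν hτ hν => (hrec (l + 1) τ ν (Nat.le_add_left 1 l) hl hτ hν).2)
    have := ih (by omega)
    push_cast at this ⊢
    linarith

/-- **Theorem 5.2 (row-wise butterfly error bound).** -/
theorem rowwise_butterfly_error_bound {L lm m₀ n₀ : ℕ}
    (hL : 1 ≤ L) (hlm : lm ≤ L) (hm : 1 ≤ m₀) (hn : 1 ≤ n₀)
    (ε : ℝ) (hε : 0 ≤ ε)
    (A : Matrix (Fin (2 ^ L * m₀)) (Fin (2 ^ L * n₀)) ℝ)
    (r : ℕ → ℕ → ℕ → ℕ)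
    (V : (l : ℕ) → (τ : ℕ) → (ν : ℕ) → Matrix (Fin (2 ^ l * n₀)) (Fin (r l τ ν)) ℝ)
    (W : (l : ℕ) → (τ : ℕ) → (ν : ℕ) →
      Matrix (Fin (r (l - 1) (τ / 2) (2 * ν)) ⊕ Fin (r (l - 1) (τ / 2) (2 * ν + 1)))
        (Fin (r l τ ν)) ℝ)
    -- (a) level-0 row bases are orthonormal and compress the level-0 blocks with
    -- relative accuracy ε
    (hleaf : ∀ ν (hν : ν < 2 ^ (L - 0)),
      (V 0 0 ν)ᵀ * V 0 0 ν = 1 ∧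
      frobNorm (blockOf A 0 0 ν (Nat.zero_le L) (Nat.two_pow_pos _) hν -
          blockOf A 0 0 ν (Nat.zero_le L) (Nat.two_pow_pos _) hν *
            (V 0 0 ν * (V 0 0 ν)ᵀ)) ≤
        ε * frobNorm (blockOf A 0 0 ν (Nat.zero_le L) (Nat.two_pow_pos _) hν))
    -- (b) the transfer matrices are orthonormal, compress the intermediate
    -- matrices with relative accuracy ε, and define the nested bases V = G·W
    (hrec : ∀ l τ ν (hl1 : 1 ≤ l) (hl : l ≤ lm) (hτ : τ < 2 ^ l) (hν : ν < 2 ^ (L - l)),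
      let G := Matrix.fromBlocks
        (V (l - 1) (τ / 2) (2 * ν)) 0 0 (V (l - 1) (τ / 2) (2 * ν + 1));
      let K' := (blockOf A l τ ν (hl.trans hlm) hτ hν).submatrix id (⇑(colSplit n₀ l hl1).symm);
      (W l τ ν)ᵀ * W l τ ν = 1 ∧
      frobNorm (K' * G - K' * G * (W l τ ν * (W l τ ν)ᵀ)) ≤ ε * frobNorm (K' * G) ∧
      V l τ ν = (G * W l τ ν).submatrix (⇑(colSplit n₀ l hl1)) id) :
    ∀ l (hl : l ≤ lm),
      ∑ τ : Fin (2 ^ l), ∑ ν : Fin (2 ^ (L - l)),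
        frobNorm (blockOf A l τ.1 ν.1 (hl.trans hlm) τ.2 ν.2 -
          blockOf A l τ.1 ν.1 (hl.trans hlm) τ.2 ν.2 *
            (V l τ.1 ν.1 * (V l τ.1 ν.1)ᵀ)) ^ 2 ≤
      ((l + 1 : ℕ) : ℝ) * ε ^ 2 * frobNorm A ^ 2 :=
  rowwise_butterfly_error_bound_general hlm ε A r V W hleaf hrec
end
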